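/- There is no additive functor F from the category of abelian groups to the arrow category of abelian groups such that for every abelian group A, F(A) is a monomorphism A ↪ I_A with I_A an injective abelian group (where the source of the arrow F(A) is A, naturally in A). -/

import Mathlib

/-!
An additive functor preserves the relation `2 • 𝟙 = 0`, so `I(ℤ/2)` is killed by `2`. Being
injective, it is also divisible, hence zero, and `ℤ/2` cannot embed into it.
-/

open CategoryTheory

universe u

namespace AddCommGrpCat

theorem exists_zsmul_eq_of_injective {X : AddCommGrpCat.{u}} [Injective X] {n : ℤ} (hn : n ≠ 0)
    (x : X) : ∃ y : X, n • y = x := by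
  let Z := AddCommGrpCat.of (ULift.{u} ℤ)
  let mul : Z ⟶ Z := ofHom (DistribSMul.toAddMonoidHom _ n)
  let g : Z ⟶ X := ofHom ((zmultiplesHom X x).comp AddEquiv.ulift.toAddMonoidHom)
  have : Mono mul := (mono_iff_injective _).2 fun _ _ hab => smul_right_injective _ hn hab
  obtain ⟨k, hk⟩ := Injective.factors g mul
  refine ⟨k ⟨1⟩, ?_⟩
  calc n • k ⟨1⟩ = k (mul ⟨1⟩) := (map_zsmul k.hom n _).symm
    _ = g ⟨1⟩ := ConcreteCategory.congr_hom hk _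
    _ = x := one_smul ℤ x

theorem subsingleton_of_injective_of_zsmul_id_eq_zero {X : AddCommGrpCat.{u}} [Injective X]
    {n : ℤ} (hn : n ≠ 0) (h : n • 𝟙 X = 0) : Subsingleton X :=
  subsingleton_of_forall_eq 0 fun x => by
    obtain ⟨y, rfl⟩ := exists_zsmul_eq_of_injective hn x
    exact ConcreteCategory.congr_hom h y

end AddCommGrpCat

theorem stmt_6 :
    ¬ ∃ (I : AddCommGrpCat.{0} ⥤ AddCommGrpCat.{0}) (m : 𝟭 AddCommGrpCat.{0} ⟶ I),
      I.Additive ∧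
      ∀ A : AddCommGrpCat.{0}, Mono (m.app A) ∧ Injective (I.obj A) := by
  rintro ⟨I, m, hI, h⟩
  let A := AddCommGrpCat.of (ZMod 2)
  obtain ⟨hmono, hinj⟩ := h A
  have hA : (2 : ℤ) • 𝟙 A = 0 := by
    ext x
    revert x
    decide
  have hIA : (2 : ℤ) • 𝟙 (I.obj A) = 0 := by
    rw [← I.map_id, ← I.map_zsmul, hA, I.map_zero]
  have : Subsingleton (I.obj A) :=
    AddCommGrpCat.subsingleton_of_injective_of_zsmul_id_eq_zero two_ne_zero hIA
  exact not_subsingleton (ZMod 2) ((AddCommGrpCat.mono_iff_injective _).1 hmono).subsingleton
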